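/- Let a, b ∈ ℝ with a > −1, b ≥ 0 and b − a > 1. Then there exists a constant C > 0 such that for all real q ≥ 0 one has Σ_{p=0}^∞ (1+p)^a / (1+p+q)^b ≤ C / (1+q)^{b−a−1}. -/

import Mathlib

/-!
Split the series at `N = ⌈q⌉₊`. For `p < N` the denominator is at least `(1 + q)^b`, and since
`a > -1` the head `Σ_{p<N} (1+p)^a` is `O(N^(a+1)) = O((1+q)^(a+1))` (telescoping the concavity
bound for `t ↦ t^(a+1)`). For `p ≥ N ≥ q` the numbers `1 + p` and `1 + p + q` agree up to a
factor `2`, so the tail is `O(Σ_{p≥N} (1+p+q)^(a-b))`, which is `O((1+q)^(a+1-b))` by comparison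
with `∫ t^(a-b) dt`, as `b - a > 1`.
-/

open Real Finset

lemma mul_rpow_sub_one_le_rpow_sub_rpow {u y : ℝ} (hu₀ : 0 ≤ u) (hu₁ : u ≤ 1) (hy : 0 ≤ y) :
    u * (y + 1) ^ (u - 1) ≤ (y + 1) ^ u - y ^ u := by
  have hz : 0 < y + 1 := by linarith
  have hinv : (y + 1)⁻¹ ≤ 1 := inv_le_one_of_one_le₀ (by linarith)
  have hy_eq : y = (y + 1) * (1 + -(y + 1)⁻¹) := by field_simp; ring
  have bernoulli : (1 + -(y + 1)⁻¹) ^ u ≤ 1 + u * -(y + 1)⁻¹ :=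
    rpow_one_add_le_one_add_mul_self (by linarith) hu₀ hu₁
  calc u * (y + 1) ^ (u - 1) = (y + 1) ^ u - (y + 1) ^ u * (1 + u * -(y + 1)⁻¹) := by
        rw [rpow_sub_one hz.ne']; ring
    _ ≤ (y + 1) ^ u - (y + 1) ^ u * (1 + -(y + 1)⁻¹) ^ u := by gcongr
    _ = (y + 1) ^ u - y ^ u := by rw [← mul_rpow hz.le (by linarith), ← hy_eq]

lemma sum_range_one_add_rpow_le_of_nonpos {s : ℝ} (hs : -1 < s) (hs₀ : s ≤ 0) (n : ℕ) :
    ∑ p ∈ range n, (1 + (p : ℝ)) ^ s ≤ (n : ℝ) ^ (s + 1) / (s + 1) := by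
  have hs₁ : 0 < s + 1 := by linarith
  have step (p : ℕ) :
      (1 + (p : ℝ)) ^ s ≤ (((p + 1 : ℕ) : ℝ) ^ (s + 1) - (p : ℝ) ^ (s + 1)) / (s + 1) := by
    rw [le_div_iff₀ hs₁, mul_comm, Nat.cast_succ, add_comm (1 : ℝ)]
    simpa using mul_rpow_sub_one_le_rpow_sub_rpow hs₁.le (by linarith) p.cast_nonneg
  calc ∑ p ∈ range n, (1 + (p : ℝ)) ^ s
      ≤ ∑ p ∈ range n, (((p + 1 : ℕ) : ℝ) ^ (s + 1) - (p : ℝ) ^ (s + 1)) / (s + 1) :=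
        sum_le_sum fun p _ => step p
    _ = (n : ℝ) ^ (s + 1) / (s + 1) := by
        rw [← sum_div, sum_range_sub (fun p : ℕ => (p : ℝ) ^ (s + 1))]
        simp [zero_rpow hs₁.ne']

lemma sum_range_one_add_rpow_le_of_nonneg {s : ℝ} (hs : 0 ≤ s) (n : ℕ) :
    ∑ p ∈ range n, (1 + (p : ℝ)) ^ s ≤ (n : ℝ) ^ (s + 1) := by
  calc ∑ p ∈ range n, (1 + (p : ℝ)) ^ s ≤ ∑ _p ∈ range n, (n : ℝ) ^ s := by
        gcongr with p hp
        have : p + 1 ≤ n := mem_range.1 hp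
        exact_mod_cast (add_comm 1 p).trans_le this
    _ = (n : ℝ) ^ (s + 1) := by
        rw [sum_const, card_range, nsmul_eq_mul, rpow_add_one' n.cast_nonneg (by linarith),
          mul_comm]

lemma sum_range_one_add_rpow_le {s : ℝ} (hs : -1 < s) (n : ℕ) :
    ∑ p ∈ range n, (1 + (p : ℝ)) ^ s ≤ (1 + (s + 1)⁻¹) * (n : ℝ) ^ (s + 1) := by
  have hpow : 0 ≤ (n : ℝ) ^ (s + 1) := by positivity
  have hinv : 0 < (s + 1)⁻¹ := inv_pos.2 (by linarith)
  rcases le_total s 0 with hs₀ | hs₀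
  · calc _ ≤ (n : ℝ) ^ (s + 1) / (s + 1) := sum_range_one_add_rpow_le_of_nonpos hs hs₀ n
      _ ≤ (1 + (s + 1)⁻¹) * (n : ℝ) ^ (s + 1) := by rw [div_eq_inv_mul]; gcongr; linarith
  · calc _ ≤ (n : ℝ) ^ (s + 1) := sum_range_one_add_rpow_le_of_nonneg hs₀ n
      _ ≤ (1 + (s + 1)⁻¹) * (n : ℝ) ^ (s + 1) := le_mul_of_one_le_left hpow (by linarith)

lemma summable_add_nat_rpow_neg {s x : ℝ} (hs : 1 < s) (hx : 0 < x) :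
    Summable fun p : ℕ => (x + p) ^ (-s) := by
  refine ((summable_one_div_nat_add_rpow x s).2 hs).congr fun p => ?_
  rw [abs_of_pos (by positivity), rpow_neg (by positivity), one_div, add_comm]

lemma sum_range_add_nat_succ_rpow_neg_le {s x : ℝ} (hs : 1 < s) (hx : 0 < x) (n : ℕ) :
    ∑ p ∈ range n, (x + ↑(p + 1)) ^ (-s) ≤ x ^ (1 - s) / (s - 1) := by
  have hanti : AntitoneOn (fun t : ℝ => t ^ (-s)) (Set.Icc x (x + n)) :=
    fun t ht _ _ htu => rpow_le_rpow_of_nonpos (hx.trans_le ht.1) htu (by linarith)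
  have hzero : (0 : ℝ) ∉ Set.uIcc x (x + n) := by
    rw [Set.uIcc_of_le (by simp)]
    exact fun h => h.1.not_gt hx
  calc ∑ p ∈ range n, (x + ↑(p + 1)) ^ (-s) ≤ ∫ t in x..x + n, t ^ (-s) := hanti.sum_le_integral
    _ = (x ^ (1 - s) - (x + n) ^ (1 - s)) / (s - 1) := by
        rw [integral_rpow (Or.inr ⟨by linarith, hzero⟩), neg_add_eq_sub,
          div_eq_div_iff (by linarith) (by linarith)]
        ring
    _ ≤ x ^ (1 - s) / (s - 1) := by
        have : 0 ≤ (x + n) ^ (1 - s) := by positivity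
        gcongr
        linarith

lemma tsum_add_nat_rpow_neg_le {s x : ℝ} (hs : 1 < s) (hx : 0 < x) :
    ∑' p : ℕ, (x + p) ^ (-s) ≤ x ^ (-s) + x ^ (1 - s) / (s - 1) := by
  rw [(summable_add_nat_rpow_neg hs hx).tsum_eq_zero_add, Nat.cast_zero, add_zero]
  gcongr
  exact tsum_le_of_sum_range_le (fun p => by positivity)
    (sum_range_add_nat_succ_rpow_neg_le hs hx)

lemma rpow_le_two_rpow_abs_mul_rpow {x y : ℝ} (a : ℝ) (hx : 0 < x) (hxy : x ≤ y)
    (hyx : y ≤ 2 * x) : x ^ a ≤ 2 ^ |a| * y ^ a := by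
  rcases le_or_gt 0 a with ha | ha
  · calc x ^ a ≤ y ^ a := rpow_le_rpow hx.le hxy ha
      _ ≤ 2 ^ |a| * y ^ a :=
        le_mul_of_one_le_left (rpow_nonneg (hx.le.trans hxy) a) (one_le_rpow one_le_two (abs_nonneg a))
  · have hy : 0 < y := hx.trans_le hxy
    calc x ^ a ≤ (y / 2) ^ a := rpow_le_rpow_of_nonpos (by positivity) (by linarith) ha.le
      _ = 2 ^ |a| * y ^ a := by
        rw [div_rpow hy.le zero_le_two, abs_of_neg ha, rpow_neg zero_le_two, div_eq_inv_mul]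


section

variable {a b q : ℝ}

lemma summable_one_add_rpow_div_rpow (hb : 0 ≤ b) (hba : 1 < b - a) (hq : 0 ≤ q) :
    Summable fun p : ℕ => (1 + (p : ℝ)) ^ a / (1 + p + q) ^ b := by
  refine (summable_add_nat_rpow_neg hba one_pos).of_nonneg_of_le (fun p => by positivity)
    fun p => ?_
  have hp : (0 : ℝ) < 1 + p := by positivity
  calc (1 + (p : ℝ)) ^ a / (1 + p + q) ^ b ≤ (1 + (p : ℝ)) ^ a / (1 + p) ^ b := by
        gcongr (1 + (p : ℝ)) ^ a / ?_
        exact rpow_le_rpow hp.le (by linarith) hb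
    _ = (1 + (p : ℝ)) ^ (-(b - a)) := by rw [← rpow_sub hp, neg_sub]

lemma sum_range_ceil_one_add_rpow_div_rpow_le (ha : -1 < a) (hb : 0 ≤ b) (hq : 0 ≤ q) :
    ∑ p ∈ range ⌈q⌉₊, (1 + (p : ℝ)) ^ a / (1 + p + q) ^ b
      ≤ (1 + (a + 1)⁻¹) / (1 + q) ^ (b - a - 1) := by
  have hq₁ : 0 < 1 + q := by linarith
  have hceil : (⌈q⌉₊ : ℝ) ≤ 1 + q := by linarith [Nat.ceil_lt_add_one hq]
  calc ∑ p ∈ range ⌈q⌉₊, (1 + (p : ℝ)) ^ a / (1 + p + q) ^ b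
      ≤ ∑ p ∈ range ⌈q⌉₊, (1 + (p : ℝ)) ^ a / (1 + q) ^ b := by
        gcongr
        simp
    _ = (∑ p ∈ range ⌈q⌉₊, (1 + (p : ℝ)) ^ a) / (1 + q) ^ b := (sum_div ..).symm
    _ ≤ (1 + (a + 1)⁻¹) * (⌈q⌉₊ : ℝ) ^ (a + 1) / (1 + q) ^ b := by
        gcongr
        exact sum_range_one_add_rpow_le ha _
    _ ≤ (1 + (a + 1)⁻¹) * (1 + q) ^ (a + 1) / (1 + q) ^ b := by
        have : 0 < (a + 1)⁻¹ := inv_pos.2 (by linarith)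
        gcongr
        linarith
    _ = (1 + (a + 1)⁻¹) / (1 + q) ^ (b - a - 1) := by
        rw [show b - a - 1 = b - (a + 1) by ring, rpow_sub hq₁]
        field_simp

lemma tsum_ceil_add_one_add_rpow_div_rpow_le (hba : 1 < b - a) (hq : 0 ≤ q) :
    ∑' p : ℕ, (1 + ((p + ⌈q⌉₊ : ℕ) : ℝ)) ^ a / (1 + ((p + ⌈q⌉₊ : ℕ) : ℝ) + q) ^ b
      ≤ 2 ^ |a| * (1 + (b - a - 1)⁻¹) / (1 + q) ^ (b - a - 1) := by
  have hq₁ : 0 < 1 + q := by linarith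
  set x : ℝ := 1 + q + ⌈q⌉₊ with hx
  have hqx : 1 + q ≤ x := by simp [hx]
  have hx₀ : 0 < x := hq₁.trans_le hqx
  have term (p : ℕ) :
      (1 + ((p + ⌈q⌉₊ : ℕ) : ℝ)) ^ a / (1 + ((p + ⌈q⌉₊ : ℕ) : ℝ) + q) ^ b
        ≤ 2 ^ |a| * (x + p) ^ (-(b - a)) := by
    have hy : 0 < x + p := by positivity
    have hcomp := rpow_le_two_rpow_abs_mul_rpow a (x := 1 + ((p + ⌈q⌉₊ : ℕ) : ℝ)) (y := x + p)
      (by positivity) (by push_cast; linarith) (by push_cast; linarith [Nat.le_ceil q])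
    calc (1 + ((p + ⌈q⌉₊ : ℕ) : ℝ)) ^ a / (1 + ((p + ⌈q⌉₊ : ℕ) : ℝ) + q) ^ b
        = (1 + ((p + ⌈q⌉₊ : ℕ) : ℝ)) ^ a / (x + p) ^ b := by rw [hx]; push_cast; ring_nf
      _ ≤ 2 ^ |a| * (x + p) ^ a / (x + p) ^ b := by gcongr
      _ = 2 ^ |a| * (x + p) ^ (-(b - a)) := by rw [mul_div_assoc, ← rpow_sub hy, neg_sub]
  have hsum := summable_add_nat_rpow_neg hba hx₀
  calc ∑' p : ℕ, (1 + ((p + ⌈q⌉₊ : ℕ) : ℝ)) ^ a / (1 + ((p + ⌈q⌉₊ : ℕ) : ℝ) + q) ^ b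
      ≤ ∑' p : ℕ, 2 ^ |a| * (x + p) ^ (-(b - a)) :=
        ((hsum.mul_left _).of_nonneg_of_le (fun p => by positivity) term).tsum_le_tsum term
          (hsum.mul_left _)
    _ = 2 ^ |a| * ∑' p : ℕ, (x + p) ^ (-(b - a)) := tsum_mul_left
    _ ≤ 2 ^ |a| * (x ^ (-(b - a)) + x ^ (1 - (b - a)) / (b - a - 1)) := by
        gcongr
        exact tsum_add_nat_rpow_neg_le hba hx₀
    _ ≤ 2 ^ |a| * ((1 + q) ^ (1 - (b - a)) + (1 + q) ^ (1 - (b - a)) / (b - a - 1)) := by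
        have h₁ : x ^ (-(b - a)) ≤ x ^ (1 - (b - a)) :=
          rpow_le_rpow_of_exponent_le (by linarith) (by linarith)
        have h₂ : x ^ (1 - (b - a)) ≤ (1 + q) ^ (1 - (b - a)) :=
          rpow_le_rpow_of_nonpos hq₁ hqx (by linarith)
        gcongr
        exact h₁.trans h₂
    _ = 2 ^ |a| * (1 + (b - a - 1)⁻¹) / (1 + q) ^ (b - a - 1) := by
        rw [show 1 - (b - a) = -(b - a - 1) by ring, rpow_neg hq₁.le]
        ring

end

theorem statement11 (a b : ℝ) (ha : -1 < a) (hb : 0 ≤ b) (hba : 1 < b - a) :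
    ∃ C : ℝ, 0 < C ∧ ∀ q : ℝ, 0 ≤ q →
      Summable (fun p : ℕ => (1 + (p : ℝ))^a / (1 + (p : ℝ) + q)^b) ∧
      ∑' p : ℕ, (1 + (p : ℝ))^a / (1 + (p : ℝ) + q)^b ≤ C / (1 + q)^(b - a - 1) := by
  have ha₁ : 0 < a + 1 := by linarith
  have hba₁ : 0 < b - a - 1 := by linarith
  refine ⟨(1 + (a + 1)⁻¹) + 2 ^ |a| * (1 + (b - a - 1)⁻¹), by positivity, fun q hq => ?_⟩
  have hsum := summable_one_add_rpow_div_rpow hb hba hq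
  refine ⟨hsum, ?_⟩
  rw [← hsum.sum_add_tsum_nat_add ⌈q⌉₊, add_div]
  exact add_le_add (sum_range_ceil_one_add_rpow_div_rpow_le ha hb hq)
    (tsum_ceil_add_one_add_rpow_div_rpow_le hba hq)
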